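/- Let λ be an atomless Borel probability measure on [0,1]. Define g_λ(x) = λ([0,x]), let G_p(t) = t(t + 2p(1−t)), let h(t) = 2q·t + 2p·(1−t), and for i ≥ 1 let g_λ^{(i)}(x) = G_p^{i−1}(g_λ(x)) (the (i−1)-fold iterate of G_p applied to g_λ(x)). Then for every n ≥ 1 and every Borel set A ⊆ [0,1], (V^n λ)(A) = ∫_A ∏_{i=1}^n h(g_λ^{(i)}(x)) dλ(x); that is, the Radon–Nikodym density of V^n λ with respect to λ is f_λ^{(n)}(x) = ∏_{i=1}^n h(g_λ^{(i)}(x)). -/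

import Mathlib

open MeasureTheory Set Filter Topology ENNReal

/-! Since `p + q = 1`, `P(x,y,·) = p δ_{min x y} + q δ_{max x y}`, also on the diagonal. For an
atomless `μ`, splitting `μ ⊗ μ` along the null diagonal and swapping the integrals gives
`V μ = h(F_μ) · μ`, where `F_μ x = μ [0,x]`. For atomless `λ` the distribution function `F_λ` is
continuous, so it pushes `λ` forward to Lebesgue measure on `[0,1]`. Hence if
`V^k λ = (G_p^k)'(F_λ) · λ`, the fundamental theorem of calculus gives `F_{V^k λ} = G_p^k ∘ F_λ`,
and as `h = G_p'` the chain rule turns `h(G_p^k ∘ F_λ) · (G_p^k)'(F_λ)` into `(G_p^{k+1})'(F_λ)`. -/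

/-- The unit interval `[0,1]` as a measurable space (with the Borel σ-algebra). -/
abbrev UnitInt : Type := ↥(Set.Icc (0:ℝ) 1)

/-- The family of measures `P(x,y,·)`: `p·δ_x + q·δ_y` if `x < y`, `δ_x` if `x = y`,
and `p·δ_y + q·δ_x` if `x > y`. -/
noncomputable def Pker (p q : ℝ) (x y : UnitInt) : Measure UnitInt :=
  if x < y then ENNReal.ofReal p • Measure.dirac x + ENNReal.ofReal q • Measure.dirac y
  else if y < x then ENNReal.ofReal p • Measure.dirac y + ENNReal.ofReal q • Measure.dirac x
  else Measure.dirac x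
/-- G_p(t) = t(t + 2p(1−t)). -/
noncomputable def Gp (p : ℝ) (t : ℝ) : ℝ := t * (t + 2*p*(1 - t))

/-- h(t) = 2q·t + 2p·(1−t). -/
noncomputable def hFun (p q : ℝ) (t : ℝ) : ℝ := 2*q*t + 2*p*(1 - t)

section DoubleIntegral

variable {α : Type*} [LinearOrder α] [TopologicalSpace α] [OrderClosedTopology α]
  [MeasurableSpace α] [BorelSpace α] (μ : Measure α)

theorem lintegral_eq_setLIntegral_Iio_add_Ioi [NullSingletonClass μ] (f : α → ℝ≥0∞)
    (x : α) : ∫⁻ y, f y ∂μ = ∫⁻ y in Iio x, f y ∂μ + ∫⁻ y in Ioi x, f y ∂μ := by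
  have hae : (Iio x ∪ Ioi x : Set α) =ᵐ[μ] univ := by
    rw [Iio_union_Ioi, ae_eq_univ, compl_compl, measure_singleton]
  have hdisj : Disjoint (Iio x) (Ioi x) := disjoint_left.2 fun _ hy hy' => lt_asymm hy hy'
  rw [← lintegral_union measurableSet_Ioi hdisj, Measure.restrict_congr_set hae,
    Measure.restrict_univ]

theorem measurable_measure_Ioi : Measurable fun x => μ (Ioi x) :=
  Antitone.measurable fun _ _ hab => measure_mono (Ioi_subset_Ioi hab)

theorem measurable_measure_Iio : Measurable fun x => μ (Iio x) :=
  Monotone.measurable fun _ _ hab => measure_mono (Iio_subset_Iio hab)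

variable [SecondCountableTopology α] [SFinite μ]

theorem lintegral_lintegral_Iio {f : α → ℝ≥0∞} (hf : Measurable f) :
    ∫⁻ x, ∫⁻ y in Iio x, f y ∂μ ∂μ = ∫⁻ y, f y * μ (Ioi y) ∂μ := by
  have hmeas : Measurable (Function.uncurry fun x y => (Iio x).indicator f y) := by
    have : (Function.uncurry fun x y => (Iio x).indicator f y)
        = {z : α × α | z.2 < z.1}.indicator (f ∘ Prod.snd) := by
      ext ⟨x, y⟩; simp [indicator]
    rw [this]
    exact (hf.comp measurable_snd).indicator (measurableSet_lt measurable_snd measurable_fst)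
  simp_rw [← lintegral_indicator measurableSet_Iio]
  rw [lintegral_lintegral_swap hmeas.aemeasurable]
  refine lintegral_congr fun y => ?_
  have : (fun x => (Iio x).indicator f y) = (Ioi y).indicator fun _ => f y := by
    ext x; simp [indicator]
  rw [this, lintegral_indicator_const measurableSet_Ioi]

theorem lintegral_lintegral_Ioi {f : α → ℝ≥0∞} (hf : Measurable f) :
    ∫⁻ x, ∫⁻ y in Ioi x, f y ∂μ ∂μ = ∫⁻ y, f y * μ (Iio y) ∂μ :=
  @lintegral_lintegral_Iio αᵒᵈ _ _ _ _ _ μ _ ‹SFinite μ› f hf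

variable [NullSingletonClass μ]

theorem lintegral_lintegral_comp_min {f : α → ℝ≥0∞} (hf : Measurable f) :
    ∫⁻ x, ∫⁻ y, f (min x y) ∂μ ∂μ = 2 * ∫⁻ x, f x * μ (Ioi x) ∂μ := by
  have inner : ∀ x, ∫⁻ y, f (min x y) ∂μ = ∫⁻ y in Iio x, f y ∂μ + f x * μ (Ioi x) := by
    intro x
    rw [lintegral_eq_setLIntegral_Iio_add_Ioi μ _ x,
      setLIntegral_congr_fun measurableSet_Iio fun y hy => by rw [min_eq_right (le_of_lt hy)],
      setLIntegral_congr_fun measurableSet_Ioi fun y hy => by rw [min_eq_left (le_of_lt hy)],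
      setLIntegral_const, mul_comm]
  simp_rw [inner]
  rw [lintegral_add_right _ (hf.fun_mul (measurable_measure_Ioi μ)), lintegral_lintegral_Iio μ hf,
    two_mul]

theorem lintegral_lintegral_comp_max {f : α → ℝ≥0∞} (hf : Measurable f) :
    ∫⁻ x, ∫⁻ y, f (max x y) ∂μ ∂μ = 2 * ∫⁻ x, f x * μ (Iio x) ∂μ :=
  @lintegral_lintegral_comp_min αᵒᵈ _ _ _ _ _ μ _ ‹SFinite μ› ‹_› f hf

end DoubleIntegral

section OneStep

variable {p q : ℝ}

theorem Pker_eq_min_max (hp : 0 ≤ p) (hq : 0 ≤ q) (hpq : p + q = 1) (x y : UnitInt) :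
    Pker p q x y = ENNReal.ofReal p • Measure.dirac (min x y)
      + ENNReal.ofReal q • Measure.dirac (max x y) := by
  unfold Pker
  split_ifs with hxy hyx
  · rw [min_eq_left hxy.le, max_eq_right hxy.le]
  · rw [min_eq_right hyx.le, max_eq_left hyx.le, add_comm]
  · obtain rfl : x = y := le_antisymm (not_lt.1 hyx) (not_lt.1 hxy)
    rw [min_self, max_self, ← add_smul, ← ENNReal.ofReal_add hp hq, hpq, ENNReal.ofReal_one,
      one_smul]

theorem lintegral_lintegral_Pker (hp : 0 ≤ p) (hq : 0 ≤ q) (hpq : p + q = 1)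
    (μ : Measure UnitInt) [SFinite μ] [NullSingletonClass μ] {A : Set UnitInt}
    (hA : MeasurableSet A) :
    ∫⁻ x, ∫⁻ y, Pker p q x y A ∂μ ∂μ
      = ∫⁻ x in A, (2 * ENNReal.ofReal p * μ (Ioi x) + 2 * ENNReal.ofReal q * μ (Iio x)) ∂μ := by
  have hχ : Measurable (A.indicator (1 : UnitInt → ℝ≥0∞)) := measurable_one.indicator hA
  have hmin : Measurable fun z : UnitInt × UnitInt => A.indicator 1 (min z.1 z.2) :=
    hχ.comp (measurable_fst.min measurable_snd)
  have hmax : Measurable fun z : UnitInt × UnitInt => A.indicator 1 (max z.1 z.2) :=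
    hχ.comp (measurable_fst.max measurable_snd)
  have inner (x : UnitInt) : ∫⁻ y, Pker p q x y A ∂μ
      = ENNReal.ofReal p * ∫⁻ y, A.indicator 1 (min x y) ∂μ
        + ENNReal.ofReal q * ∫⁻ y, A.indicator 1 (max x y) ∂μ := by
    simp only [Pker_eq_min_max hp hq hpq, Measure.add_apply, Measure.smul_apply, smul_eq_mul,
      Measure.dirac_apply' _ hA]
    have hminx : Measurable fun y => A.indicator 1 (min x y) := hmin.comp measurable_prodMk_left
    have hmaxx : Measurable fun y => A.indicator 1 (max x y) := hmax.comp measurable_prodMk_left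
    rw [lintegral_add_left (hminx.const_mul _), lintegral_const_mul _ hminx,
      lintegral_const_mul _ hmaxx]
  simp_rw [inner]
  rw [lintegral_add_left (hmin.lintegral_prod_right'.const_mul _),
    lintegral_const_mul _ hmin.lintegral_prod_right',
    lintegral_const_mul _ hmax.lintegral_prod_right',
    lintegral_lintegral_comp_min μ hχ, lintegral_lintegral_comp_max μ hχ]
  have hIoi : Measurable fun x => μ (Ioi x) := measurable_measure_Ioi μ
  have hIio : Measurable fun x => μ (Iio x) := measurable_measure_Iio μ
  simp only [← indicator_mul_left _ _ fun x => μ (Ioi x),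
    ← indicator_mul_left _ _ fun x => μ (Iio x), Pi.one_apply, one_mul]
  rw [lintegral_indicator hA, lintegral_indicator hA, lintegral_add_left (hIoi.const_mul _),
    lintegral_const_mul _ hIoi, lintegral_const_mul _ hIio]
  ring

theorem ofReal_hFun_measureReal_Iic {α : Type*} [LinearOrder α] [TopologicalSpace α]
    [OrderClosedTopology α] [MeasurableSpace α] [OpensMeasurableSpace α]
    (hp : 0 ≤ p) (hq : 0 ≤ q) (μ : Measure α) [IsProbabilityMeasure μ] [NullSingletonClass μ]
    (x : α) :
    ENNReal.ofReal (hFun p q (μ.real (Iic x)))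
      = 2 * ENNReal.ofReal p * μ (Ioi x) + 2 * ENNReal.ofReal q * μ (Iio x) := by
  have hs1 : μ.real (Iic x) ≤ 1 := measureReal_le_one
  have hIio : μ (Iio x) = ENNReal.ofReal (μ.real (Iic x)) := by
    rw [measure_congr Iio_ae_eq_Iic, ofReal_measureReal]
  have hIoi : μ (Ioi x) = ENNReal.ofReal (1 - μ.real (Iic x)) := by
    rw [← compl_Iic, prob_compl_eq_one_sub measurableSet_Iic, ← ofReal_measureReal,
      ← ENNReal.ofReal_one, ENNReal.ofReal_sub _ measureReal_nonneg]
  rw [hIoi, hIio, hFun, add_comm,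
    ENNReal.ofReal_add (mul_nonneg (by positivity) (sub_nonneg.2 hs1)) (by positivity),
    ENNReal.ofReal_mul (p := 2 * p) (by positivity),
    ENNReal.ofReal_mul (p := 2 * q) (by positivity),
    ENNReal.ofReal_mul (p := 2) zero_le_two, ENNReal.ofReal_mul (p := 2) zero_le_two,
    ENNReal.ofReal_ofNat]

theorem eq_withDensity_of_Pker (hp : 0 ≤ p) (hq : 0 ≤ q) (hpq : p + q = 1)
    {V : Measure UnitInt → Measure UnitInt}
    (hV : ∀ (μ : Measure UnitInt) (A : Set UnitInt), MeasurableSet A →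
      V μ A = ∫⁻ x, ∫⁻ y, Pker p q x y A ∂μ ∂μ)
    (μ : Measure UnitInt) [IsProbabilityMeasure μ] [NullSingletonClass μ] :
    V μ = μ.withDensity fun x => ENNReal.ofReal (hFun p q (μ.real (Iic x))) := by
  ext A hA
  rw [hV μ A hA, lintegral_lintegral_Pker hp hq hpq μ hA, withDensity_apply _ hA]
  exact setLIntegral_congr_fun hA fun x _ => (ofReal_hFun_measureReal_Iic hp hq μ x).symm

end OneStep

theorem ProbabilityTheory.continuous_cdf (μ : Measure ℝ) [IsProbabilityMeasure μ]
    [NullSingletonClass μ] : Continuous (cdf μ) := by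
  refine continuous_iff_continuousAt.2 fun x => ?_
  rw [(monotone_cdf μ).continuousAt_iff_leftLim_eq_rightLim, StieltjesFunction.rightLim_eq]
  have hjump := (cdf μ).measure_singleton x
  rw [measure_cdf, measure_singleton, eq_comm, ENNReal.ofReal_eq_zero, sub_nonpos] at hjump
  exact le_antisymm ((monotone_cdf μ).leftLim_le le_rfl) hjump

theorem continuous_measureReal_Iic (μ : Measure UnitInt) [IsProbabilityMeasure μ]
    [NullSingletonClass μ] : Continuous fun x => μ.real (Iic x) := by
  have : IsProbabilityMeasure (μ.map Subtype.val) :=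
    Measure.isProbabilityMeasure_map measurable_subtype_coe.aemeasurable
  have : NullSingletonClass (μ.map Subtype.val) := ⟨fun a => by
    rw [Measure.map_apply measurable_subtype_coe (measurableSet_singleton a)]
    exact (subsingleton_singleton.preimage Subtype.val_injective).measure_zero μ⟩
  have hcdf : (fun x : UnitInt => μ.real (Iic x))
      = ProbabilityTheory.cdf (μ.map Subtype.val) ∘ Subtype.val := by
    ext x
    rw [Function.comp_apply, ProbabilityTheory.cdf_eq_real,
      map_measureReal_apply measurable_subtype_coe measurableSet_Iic]
    rfl
  rw [hcdf]
  exact (ProbabilityTheory.continuous_cdf _).comp continuous_subtype_val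

theorem Set.Iic_inter_Icc_of_le {α : Type*} [Preorder α] {a b c : α} (h : c ≤ b) :
    Iic c ∩ Icc a b = Icc a c := by
  ext u
  simp only [mem_inter_iff, mem_Iic, mem_Icc]
  exact ⟨fun hu => ⟨hu.2.1, hu.1⟩, fun hu => ⟨hu.2, hu.1, hu.2.trans h⟩⟩

theorem exists_preimage_Iic_eq_Iic {α β : Type*} [LinearOrder α] [TopologicalSpace α]
    [OrderClosedTopology α] [CompactSpace α] [LinearOrder β] [TopologicalSpace β]
    [OrderClosedTopology β] {g : α → β} (hg : Continuous g) (hmono : Monotone g)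
    {a : β} (ha : a ∈ range g) : ∃ c, g c = a ∧ g ⁻¹' Iic a = Iic c := by
  obtain ⟨c, hc, hcmax⟩ := ((isClosed_singleton.preimage hg).isCompact).exists_isGreatest ha
  refine ⟨c, hc, Subset.antisymm (fun t ht => ?_) fun t ht => (hmono ht).trans_eq hc⟩
  by_contra hct
  have hta : g t = a := le_antisymm ht (hc ▸ hmono (le_of_not_ge hct))
  exact hct (hcmax hta)

section CDF

variable (μ : Measure UnitInt) [IsProbabilityMeasure μ] [NullSingletonClass μ]

theorem map_measureReal_Iic : μ.map (fun x => μ.real (Iic x)) = volume.restrict (Icc 0 1) := by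
  set g : UnitInt → ℝ := fun x => μ.real (Iic x)
  have hg : Continuous g := continuous_measureReal_Iic μ
  have hmono : Monotone g := fun _ _ h => measureReal_mono (Iic_subset_Iic.2 h)
  have g_bot : g ⊥ = 0 := by
    simp only [g, Iic_bot, measureReal_def, measure_singleton, toReal_zero]
  have g_top : g ⊤ = 1 := by simp only [g, Iic_top, probReal_univ]
  refine Measure.ext_of_Iic _ _ fun a => ?_
  rw [Measure.map_apply hg.measurable measurableSet_Iic, Measure.restrict_apply measurableSet_Iic]
  rcases lt_or_ge a 0 with ha0 | ha0
  · have hempty : g ⁻¹' Iic a = ∅ :=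
      eq_empty_of_forall_notMem fun t ht => (ha0.trans_le measureReal_nonneg).not_ge ht
    rw [hempty, measure_empty, Iic_inter_Icc_of_le (by linarith), Real.volume_Icc,
      ENNReal.ofReal_of_nonpos (by linarith)]
  rcases le_or_gt a 1 with ha1 | ha1
  · obtain ⟨c, hc, hpre⟩ := exists_preimage_Iic_eq_Iic hg hmono
      (intermediate_value_univ _ _ hg ⟨g_bot.symm ▸ ha0, g_top.symm ▸ ha1⟩)
    rw [hpre, Iic_inter_Icc_of_le ha1, Real.volume_Icc, sub_zero, ← hc, ofReal_measureReal]
  · have huniv : g ⁻¹' Iic a = univ :=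
      eq_univ_of_forall fun t => (measureReal_le_one).trans ha1.le
    rw [huniv, measure_univ,
      inter_eq_right.2 (Icc_subset_Iic_self.trans (Iic_subset_Iic.2 ha1.le)), Real.volume_Icc,
      sub_zero, ENNReal.ofReal_one]

theorem setLIntegral_Iic_comp_measureReal_Iic {f : ℝ → ℝ≥0∞} (hf : Measurable f)
    (x : UnitInt) : ∫⁻ t in Iic x, f (μ.real (Iic t)) ∂μ = ∫⁻ u in Icc 0 (μ.real (Iic x)), f u := by
  set g : UnitInt → ℝ := fun t => μ.real (Iic t)
  have hg : Measurable g := (continuous_measureReal_Iic μ).measurable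
  have hs : g x ≤ 1 := measureReal_le_one
  have hmap := map_measureReal_Iic μ
  have hae : Iic x =ᵐ[μ] g ⁻¹' Iic (g x) := by
    refine ae_eq_of_subset_of_measure_ge (fun t ht => measureReal_mono (Iic_subset_Iic.2 ht))
      ?_ measurableSet_Iic.nullMeasurableSet (measure_ne_top μ _)
    rw [← Measure.map_apply hg measurableSet_Iic, hmap, Measure.restrict_apply measurableSet_Iic,
      Iic_inter_Icc_of_le hs, Real.volume_Icc, sub_zero, ofReal_measureReal]
  rw [Measure.restrict_congr_set hae, ← setLIntegral_map measurableSet_Iic hf hg, hmap,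
    Measure.restrict_restrict measurableSet_Iic, Iic_inter_Icc_of_le hs]

theorem withDensity_Iic_of_hasDerivAt {Φ φ : ℝ → ℝ} (hΦ : ∀ t, HasDerivAt Φ (φ t) t)
    (hφ : Continuous φ) (hφ_nonneg : ∀ t ∈ Icc (0 : ℝ) 1, 0 ≤ φ t) (x : UnitInt) :
    μ.withDensity (fun t => ENNReal.ofReal (φ (μ.real (Iic t)))) (Iic x)
      = ENNReal.ofReal (Φ (μ.real (Iic x)) - Φ 0) := by
  have hs : μ.real (Iic x) ≤ 1 := measureReal_le_one
  rw [withDensity_apply _ measurableSet_Iic,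
    setLIntegral_Iic_comp_measureReal_Iic μ (f := fun u => ENNReal.ofReal (φ u)) (by fun_prop),
    ← ofReal_integral_eq_lintegral_ofReal hφ.integrableOn_Icc, integral_Icc_eq_integral_Ioc,
    ← intervalIntegral.integral_of_le measureReal_nonneg,
    intervalIntegral.integral_eq_sub_of_hasDerivAt (fun t _ => hΦ t)
      (hφ.intervalIntegrable _ _)]
  exact (ae_restrict_iff' measurableSet_Icc).2
    (Eventually.of_forall fun t ht => hφ_nonneg t ⟨ht.1, ht.2.trans hs⟩)

end CDF

section Gp

variable {p q : ℝ}

@[fun_prop]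
theorem continuous_Gp : Continuous (Gp p) := by
  unfold Gp; fun_prop

@[fun_prop]
theorem continuous_hFun : Continuous (hFun p q) := by
  unfold hFun; fun_prop

theorem hasDerivAt_Gp (hpq : p + q = 1) (t : ℝ) : HasDerivAt (Gp p) (hFun p q t) t := by
  have h : HasDerivAt (fun t => t * (t + 2 * p * (1 - t))) _ t :=
    (hasDerivAt_id' t).fun_mul ((hasDerivAt_id' t).fun_add
      (((hasDerivAt_const t 1).fun_sub (hasDerivAt_id' t)).const_mul (2 * p)))
  obtain rfl : q = 1 - p := by linarith
  exact h.congr_deriv (by simp only [hFun]; ring)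

theorem hasDerivAt_Gp_iterate (hpq : p + q = 1) (k : ℕ) (t : ℝ) :
    HasDerivAt (Gp p)^[k] (∏ i ∈ Finset.range k, hFun p q ((Gp p)^[i] t)) t := by
  induction k with
  | zero => simpa using hasDerivAt_id t
  | succ k ih =>
    rw [Function.iterate_succ', Finset.prod_range_succ, mul_comm]
    exact (hasDerivAt_Gp hpq _).comp t ih

theorem Gp_iterate_zero (k : ℕ) : (Gp p)^[k] 0 = 0 :=
  Function.iterate_fixed (by simp [Gp]) k

theorem Gp_iterate_one (k : ℕ) : (Gp p)^[k] 1 = 1 :=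
  Function.iterate_fixed (by simp [Gp]) k

theorem mapsTo_Gp (hp : 0 ≤ p) (hp1 : p ≤ 1) : MapsTo (Gp p) (Icc 0 1) (Icc 0 1) := by
  rintro t ⟨h0, h1⟩
  unfold Gp
  constructor
  · exact mul_nonneg h0 (by nlinarith)
  · nlinarith [sq_nonneg (1 - t), mul_nonneg (mul_nonneg hp h0) (sub_nonneg.2 h1),
      mul_nonneg (mul_nonneg (sub_nonneg.2 hp1) h0) (sub_nonneg.2 h1)]

theorem hFun_nonneg (hp : 0 ≤ p) (hq : 0 ≤ q) {t : ℝ} (ht : t ∈ Icc (0 : ℝ) 1) :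
    0 ≤ hFun p q t := by
  obtain ⟨h0, h1⟩ := ht
  unfold hFun; nlinarith

theorem prod_hFun_Gp_iterate_nonneg (hp : 0 ≤ p) (hq : 0 ≤ q) (hpq : p + q = 1) (k : ℕ)
    {t : ℝ} (ht : t ∈ Icc (0 : ℝ) 1) :
    0 ≤ ∏ i ∈ Finset.range k, hFun p q ((Gp p)^[i] t) :=
  Finset.prod_nonneg fun i _ => hFun_nonneg hp hq ((mapsTo_Gp hp (by linarith)).iterate i ht)

end Gp

theorem iterate_eq_withDensity {p q : ℝ} (hp : 0 ≤ p) (hq : 0 ≤ q) (hpq : p + q = 1)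
    {V : Measure UnitInt → Measure UnitInt}
    (hV : ∀ (μ : Measure UnitInt) (A : Set UnitInt), MeasurableSet A →
      V μ A = ∫⁻ x, ∫⁻ y, Pker p q x y A ∂μ ∂μ)
    (lam : Measure UnitInt) [IsProbabilityMeasure lam] [NullSingletonClass lam] (n : ℕ) :
    V^[n] lam = lam.withDensity fun x =>
      ENNReal.ofReal (∏ i ∈ Finset.range n, hFun p q ((Gp p)^[i] (lam.real (Iic x)))) := by
  have hcdf_cont := continuous_measureReal_Iic lam
  have hcdf_mem (x : UnitInt) : lam.real (Iic x) ∈ Icc (0 : ℝ) 1 :=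
    ⟨measureReal_nonneg, measureReal_le_one⟩
  induction n with
  | zero => simp
  | succ k ih =>
    have hcdf (x : UnitInt) :
        V^[k] lam (Iic x) = ENNReal.ofReal ((Gp p)^[k] (lam.real (Iic x))) := by
      rw [ih, withDensity_Iic_of_hasDerivAt lam (hasDerivAt_Gp_iterate hpq k)
        (by fun_prop) (fun t ht => prod_hFun_Gp_iterate_nonneg hp hq hpq k ht) x,
        Gp_iterate_zero, sub_zero]
    have : IsProbabilityMeasure (V^[k] lam) :=
      ⟨by rw [← Iic_top, hcdf, Iic_top, probReal_univ, Gp_iterate_one, ENNReal.ofReal_one]⟩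
    have : NullSingletonClass (V^[k] lam) := ih ▸ inferInstance
    have hcdf_real (x : UnitInt) : (V^[k] lam).real (Iic x) = (Gp p)^[k] (lam.real (Iic x)) := by
      rw [measureReal_def, hcdf, ENNReal.toReal_ofReal
        ((mapsTo_Gp hp (by linarith)).iterate k (hcdf_mem x)).1]
    rw [Function.iterate_succ_apply', eq_withDensity_of_Pker hp hq hpq hV]
    simp_rw [hcdf_real]
    rw [ih, ← withDensity_mul _ (Continuous.measurable (by fun_prop)).ennreal_ofReal
      (Continuous.measurable (by fun_prop)).ennreal_ofReal]
    congr 1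
    funext x
    rw [Pi.mul_apply, ← ENNReal.ofReal_mul (prod_hFun_Gp_iterate_nonneg hp hq hpq k (hcdf_mem x)),
      Finset.prod_range_succ]

theorem iterate_density_formula_general (p q : ℝ) (hp : 0 ≤ p) (hq : 0 ≤ q) (hpq : p + q = 1)
    (V : Measure UnitInt → Measure UnitInt)
    (hV : ∀ (μ : Measure UnitInt) (A : Set UnitInt), MeasurableSet A →
      V μ A = ∫⁻ x, ∫⁻ y, Pker p q x y A ∂μ ∂μ)
    (lam : Measure UnitInt) [IsProbabilityMeasure lam] [NullSingletonClass lam]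
    (n : ℕ) :
    ∀ A : Set UnitInt, MeasurableSet A →
      V^[n] lam A = ∫⁻ x in A,
        ENNReal.ofReal
          (∏ i ∈ Finset.range n, hFun p q ((Gp p)^[i] ((lam (Set.Iic x)).toReal))) ∂lam := by
  intro A hA
  rw [iterate_eq_withDensity hp hq hpq hV lam n, withDensity_apply _ hA]
  rfl

/-- for an atomless Borel probability measure λ on [0,1], with
g_λ(x) = λ([0,x]) and g_λ^{(i)}(x) = G_p^{i−1}(g_λ(x)), the Radon–Nikodym density of V^n λ
with respect to λ is f_λ^{(n)}(x) = ∏_{i=1}^n h(g_λ^{(i)}(x)), i.e. for every Borel set A,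
(V^n λ)(A) = ∫_A ∏_{i=1}^n h(g_λ^{(i)}(x)) dλ(x). -/
theorem iterate_density_formula (p q : ℝ) (hp : 0 ≤ p) (hq : 0 ≤ q) (hpq : p + q = 1)
    (V : Measure UnitInt → Measure UnitInt)
    (hV : ∀ (μ : Measure UnitInt) (A : Set UnitInt), MeasurableSet A →
      V μ A = ∫⁻ x, ∫⁻ y, Pker p q x y A ∂μ ∂μ)
    (lam : Measure UnitInt) [IsProbabilityMeasure lam] [NullSingletonClass lam]
    (n : ℕ) (hn : 1 ≤ n) :
    ∀ A : Set UnitInt, MeasurableSet A →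
      V^[n] lam A = ∫⁻ x in A,
        ENNReal.ofReal
          (∏ i ∈ Finset.range n, hFun p q ((Gp p)^[i] ((lam (Set.Iic x)).toReal))) ∂lam :=
  iterate_density_formula_general p q hp hq hpq V hV lam n
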